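/- Let V' be a finite-dimensional real vector space with a symmetric bilinear form ⟨·,·⟩, let Γ_ℝ = V' ⊕ ℝv ⊕ ℝv* be its hyperbolic extension, and let V = Γ_ℝ ⊕ ℝw ⊕ ℝw* be a further hyperbolic extension. Let ξ : V → V be the isometry fixing V' pointwise and swapping v ↔ w, v* ↔ w*. Let σ ∈ (Γ_ℝ)_ℂ satisfy ⟨σ,σ⟩ = 0, ⟨σ+σ̄, σ+σ̄⟩ > 0, ⟨Im σ, v⟩ = 0 and r := ⟨Re σ, v⟩ ≠ 0; let P = span_ℝ(Re σ, Im σ), and let ω, B ∈ Γ_ℝ with ω ⊥ P, α := ω² > 0, and ⟨ω,v⟩ = ⟨B,v⟩ = 0. Define σᵛ := r⁻¹(−½⟨B+iω+v*, B+iω+v*⟩·v + B + iω + v*), ωᵛ := r⁻¹(Im σ − ⟨Im σ, v*⟩v − ⟨Im σ, B⟩v), Bᵛ := r⁻¹(Re σ − ⟨Re σ, v⟩v* − ⟨Re σ, v*⟩v − ⟨Re σ, B⟩v), and Pᵛ := span_ℝ(Re σᵛ, Im σᵛ). Then: ⟨σᵛ,σᵛ⟩ = 0 and ⟨σᵛ+σ̄ᵛ,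 σᵛ+σ̄ᵛ⟩ > 0; ωᵛ ⊥ Pᵛ and (ωᵛ)² > 0; and as subspaces of V one has ξ(H₂(ω,B)) = H₁(Pᵛ, Bᵛ) and ξ(H₁(P,B)) = H₂(ωᵛ, Bᵛ) (where H₂(ωᵛ,Bᵛ) is formed with (ωᵛ)² in place of α). -/
import Mathlib


section defs

variable {W : Type*} [AddCommGroup W] [Module ℝ W]

/-- The hyperbolic extension of a bilinear form `b` on `W` to `W × ℝ × ℝ`, where
`(x, a, c)` represents `x + a•e + c•e*` for a hyperbolic pair `(e, e*)`:
`W ⊥ (ℝe ⊕ ℝe*)`, `e² = e*² = 0`, `⟨e,e*⟩ = 1`. -/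
noncomputable def hypBilin (b : LinearMap.BilinForm ℝ W) :
    LinearMap.BilinForm ℝ (W × ℝ × ℝ) :=
  b.compl₁₂ (LinearMap.fst ℝ W (ℝ × ℝ)) (LinearMap.fst ℝ W (ℝ × ℝ)) +
  (LinearMap.mul ℝ ℝ).compl₁₂
    ((LinearMap.fst ℝ ℝ ℝ).comp (LinearMap.snd ℝ W (ℝ × ℝ)))
    ((LinearMap.snd ℝ ℝ ℝ).comp (LinearMap.snd ℝ W (ℝ × ℝ))) +
  (LinearMap.mul ℝ ℝ).compl₁₂
    ((LinearMap.snd ℝ ℝ ℝ).comp (LinearMap.snd ℝ W (ℝ × ℝ)))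
    ((LinearMap.fst ℝ ℝ ℝ).comp (LinearMap.snd ℝ W (ℝ × ℝ)))

/-- Conjugation on the complexification `W_ℂ`, represented by pairs `(re, im)`. -/
noncomputable def conjC (p : W × W) : W × W := (p.1, -p.2)

/-- Multiplication by a complex scalar on the complexification `W_ℂ = W × W`. -/
noncomputable def smulC (s : ℂ) (p : W × W) : W × W :=
  (s.re • p.1 - s.im • p.2, s.re • p.2 + s.im • p.1)

/-- The ℂ-bilinear extension of a bilinear form `Q` on `W` to `W_ℂ = W × W`. -/
noncomputable def formC (Q : LinearMap.BilinForm ℝ W) (p q : W × W) : ℂ :=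
  ⟨Q p.1 q.1 - Q p.2 q.2, Q p.1 q.2 + Q p.2 q.1⟩

/-- `H₁(P,B) = {x − ⟨x,B⟩w : x ∈ P}`. -/
noncomputable def H1 (Q : LinearMap.BilinForm ℝ W) (P : Submodule ℝ W) (B : W) :
    Submodule ℝ (W × ℝ × ℝ) :=
  P.map (LinearMap.prod LinearMap.id (LinearMap.prod (-(Q.flip B)) 0))

/-- `H₂(ω,B) = ℝ(½(ω²−B²)w + w* + B) ⊕ ℝ(ω − ⟨ω,B⟩w)`. -/
noncomputable def H2 (Q : LinearMap.BilinForm ℝ W) (ω B : W) :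
    Submodule ℝ (W × ℝ × ℝ) :=
  Submodule.span ℝ {(B, (Q ω ω - Q B B) / 2, 1), (ω, -(Q ω B), 0)}

end defs

section mirror

variable {V' : Type*} [AddCommGroup V'] [Module ℝ V']

/-- `v = (0,1,0)` in `Γ_ℝ = V' × ℝ × ℝ` (coordinates `x + a•v + c•v*`). -/
noncomputable def vGam (V' : Type*) [AddCommGroup V'] [Module ℝ V'] : V' × ℝ × ℝ :=
  (0, 1, 0)

/-- `v* = (0,0,1)` in `Γ_ℝ = V' × ℝ × ℝ`. -/
noncomputable def vsGam (V' : Type*) [AddCommGroup V'] [Module ℝ V'] : V' × ℝ × ℝ :=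
  (0, 0, 1)

/-- `σᵛ := r⁻¹(−½⟨B+iω+v*, B+iω+v*⟩·v + B + iω + v*)`, with `r = ⟨Re σ, v⟩`, as an element
of the complexification of `Γ_ℝ = V' × ℝ × ℝ` (represented by a pair of real vectors). -/
noncomputable def mirrorSigma (b : LinearMap.BilinForm ℝ V') (σr ω B : V' × ℝ × ℝ) :
    (V' × ℝ × ℝ) × (V' × ℝ × ℝ) :=
  (hypBilin b σr (vGam V'))⁻¹ •
    (smulC (-(formC (hypBilin b) (B + vsGam V', ω) (B + vsGam V', ω)) / 2) (vGam V', 0) +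
      (B + vsGam V', ω))

/-- `ωᵛ := r⁻¹(Im σ − ⟨Im σ, v*⟩v − ⟨Im σ, B⟩v)`. -/
noncomputable def mirrorOmega (b : LinearMap.BilinForm ℝ V') (σr σi B : V' × ℝ × ℝ) :
    V' × ℝ × ℝ :=
  (hypBilin b σr (vGam V'))⁻¹ •
    (σi - (hypBilin b σi (vsGam V')) • vGam V' - (hypBilin b σi B) • vGam V')

/-- `Bᵛ := r⁻¹(Re σ − ⟨Re σ, v⟩v* − ⟨Re σ, v*⟩v − ⟨Re σ, B⟩v)`. -/
noncomputable def mirrorBField (b : LinearMap.BilinForm ℝ V') (σr B : V' × ℝ × ℝ) :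
    V' × ℝ × ℝ :=
  (hypBilin b σr (vGam V'))⁻¹ •
    (σr - (hypBilin b σr (vGam V')) • vsGam V' - (hypBilin b σr (vsGam V')) • vGam V' -
      (hypBilin b σr B) • vGam V')

/-- `ξ : V → V`, `V = Γ_ℝ ⊕ ℝw ⊕ ℝw*` with `Γ_ℝ = V' ⊕ ℝv ⊕ ℝv*`:  the isometry fixing
`V'` pointwise and swapping `v ↔ w`, `v* ↔ w*`. -/
noncomputable def xiMap (V' : Type*) [AddCommGroup V'] [Module ℝ V'] :
    ((V' × ℝ × ℝ) × ℝ × ℝ) →ₗ[ℝ] ((V' × ℝ × ℝ) × ℝ × ℝ) where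
  toFun p := ((p.1.1, p.2.1, p.2.2), p.1.2.1, p.1.2.2)
  map_add' _ _ := rfl
  map_smul' _ _ := rfl

end mirror

lemma hypBilin_apply {W : Type*} [AddCommGroup W] [Module ℝ W] (b : LinearMap.BilinForm ℝ W)
    (x y : W × ℝ × ℝ) : hypBilin b x y = b x.1 y.1 + x.2.1 * y.2.2 + x.2.2 * y.2.1 := by
  simp [hypBilin, LinearMap.compl₁₂_apply, LinearMap.mul_apply']

set_option maxHeartbeats 2000000 in
/-- The mirror map computation: with `σᵛ, ωᵛ, Bᵛ, Pᵛ` as above, `σᵛ` again satisfies the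
period conditions, `ωᵛ` is orthogonal to `Pᵛ` with `(ωᵛ)² > 0`, and as subspaces of
`V = Γ_ℝ ⊕ ℝw ⊕ ℝw*` one has `ξ(H₂(ω,B)) = H₁(Pᵛ,Bᵛ)` and `ξ(H₁(P,B)) = H₂(ωᵛ,Bᵛ)`. -/
theorem stmt18 {V' : Type*} [AddCommGroup V'] [Module ℝ V'] [FiniteDimensional ℝ V']
    (b : LinearMap.BilinForm ℝ V') (hsymm : ∀ x y, b x y = b y x)
    (σr σi : V' × ℝ × ℝ)
    (hσ0 : formC (hypBilin b) (σr, σi) (σr, σi) = 0)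
    (hσpos : 0 < (formC (hypBilin b) ((σr, σi) + conjC (σr, σi))
      ((σr, σi) + conjC (σr, σi))).re)
    (hIm : hypBilin b σi (vGam V') = 0)
    (hr : hypBilin b σr (vGam V') ≠ 0)
    (ω B : V' × ℝ × ℝ)
    (hωP : ∀ x ∈ Submodule.span ℝ ({σr, σi} : Set (V' × ℝ × ℝ)), hypBilin b ω x = 0)
    (hα : 0 < hypBilin b ω ω)
    (hωv : hypBilin b ω (vGam V') = 0)
    (hBv : hypBilin b B (vGam V') = 0) :
    -- σᵛ satisfies the period conditions
    (formC (hypBilin b) (mirrorSigma b σr ω B) (mirrorSigma b σr ω B) = 0 ∧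
      0 < (formC (hypBilin b)
        (mirrorSigma b σr ω B + conjC (mirrorSigma b σr ω B))
        (mirrorSigma b σr ω B + conjC (mirrorSigma b σr ω B))).re) ∧
    -- ωᵛ ⊥ Pᵛ and (ωᵛ)² > 0
    (hypBilin b (mirrorOmega b σr σi B) (mirrorSigma b σr ω B).1 = 0 ∧
      hypBilin b (mirrorOmega b σr σi B) (mirrorSigma b σr ω B).2 = 0 ∧
      0 < hypBilin b (mirrorOmega b σr σi B) (mirrorOmega b σr σi B)) ∧
    -- ξ(H₂(ω,B)) = H₁(Pᵛ,Bᵛ)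
    Submodule.map (xiMap V') (H2 (hypBilin b) ω B) =
      H1 (hypBilin b)
        (Submodule.span ℝ {(mirrorSigma b σr ω B).1, (mirrorSigma b σr ω B).2})
        (mirrorBField b σr B) ∧
    -- ξ(H₁(P,B)) = H₂(ωᵛ,Bᵛ)
    Submodule.map (xiMap V') (H1 (hypBilin b) (Submodule.span ℝ {σr, σi}) B) =
      H2 (hypBilin b) (mirrorOmega b σr σi B) (mirrorBField b σr B) := by
  classical
  have hB3 : B.2.2 = 0 := by simpa [hypBilin_apply, vGam] using hBv
  have hω3 : ω.2.2 = 0 := by simpa [hypBilin_apply, vGam] using hωv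
  have hσi3 : σi.2.2 = 0 := by simpa [hypBilin_apply, vGam] using hIm
  have hr' : σr.2.2 ≠ 0 := by simpa [hypBilin_apply, vGam] using hr
  have hωσr : hypBilin b ω σr = 0 := hωP σr (Submodule.subset_span (by simp))
  have hωσi : hypBilin b ω σi = 0 := hωP σi (Submodule.subset_span (by simp))
  simp only [hypBilin_apply, formC, Complex.ext_iff, Prod.fst_add, Prod.snd_add, conjC,
    Prod.fst_neg, Prod.snd_neg, Complex.zero_re, Complex.zero_im, map_add, map_neg,
    LinearMap.add_apply, LinearMap.neg_apply, hB3, hω3, hσi3, mul_zero, zero_mul,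
    add_zero, zero_add, neg_neg, add_neg_cancel, map_zero, neg_zero]
    at hσ0 hσpos hωσr hωσi
  obtain ⟨e1, e2⟩ := hσ0
  have hbs5 : b ω.1 σr.1 = -(ω.2.1 * σr.2.2) := by linarith
  have hbs4 : b σr.1 ω.1 = -(ω.2.1 * σr.2.2) := by rw [hsymm]; exact hbs5
  have hbs6 : b σi.1 ω.1 = 0 := by rw [hsymm]; exact hωσi
  have hbs8 : b σr.1 σi.1 = -(σr.2.2 * σi.2.1) := by have := hsymm σi.1 σr.1; linarith
  have hbs9 : b σi.1 σr.1 = -(σr.2.2 * σi.2.1) := by rw [hsymm]; exact hbs8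
  have hbs10 : b σr.1 σr.1 = b σi.1 σi.1 - 2*(σr.2.1*σr.2.2) := by linarith
  have hbs1 : b B.1 ω.1 = b ω.1 B.1 := hsymm _ _
  have hbs2 : b B.1 σr.1 = b σr.1 B.1 := hsymm _ _
  have hbs3 : b B.1 σi.1 = b σi.1 B.1 := hsymm _ _
  have hσipos : 0 < b σi.1 σi.1 := by linarith
  have hα' : 0 < b ω.1 ω.1 := by simpa [hypBilin_apply, hω3] using hα
  have hsq : 0 < σr.2.2⁻¹ ^ 2 := by
    have := inv_ne_zero hr'
    rcases this.lt_or_gt with h|h <;> nlinarith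
  have hc1 : σr.2.2 * σr.2.2⁻¹ = 1 := mul_inv_cancel₀ hr'
  have hc2 : σr.2.2⁻¹ * σr.2.2 = 1 := inv_mul_cancel₀ hr'
  have invsm : ∀ x y : (V' × ℝ × ℝ) × ℝ × ℝ, x = σr.2.2 • y → y = σr.2.2⁻¹ • x := by
    intro x y h; rw [h, smul_smul, hc2, one_smul]
  have idA : (xiMap V') (B, (hypBilin b ω ω - hypBilin b B B) / 2, 1)
      = σr.2.2 • (LinearMap.id.prod ((-(hypBilin b).flip (mirrorBField b σr B)).prod 0))
          (mirrorSigma b σr ω B).1 := by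
    simp [hypBilin_apply, formC, smulC, conjC, mirrorSigma, mirrorOmega, mirrorBField,
      vGam, vsGam, xiMap, map_add, map_sub, map_smul, map_neg, map_zero,
      LinearMap.add_apply, LinearMap.sub_apply, LinearMap.smul_apply, LinearMap.neg_apply,
      LinearMap.prod_apply, Pi.prod, LinearMap.flip_apply, Prod.ext_iff, smul_smul,
      smul_eq_mul, hB3, hω3, hσi3, hbs1, hbs2, hbs3, hbs4, hbs5, hbs6, hωσi, hbs8, hbs9,
      hbs10, hc1, hc2]
    and_intros <;> first | rfl | (field_simp; ring) | field_simp | ring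
  have idB : (xiMap V') (ω, -(hypBilin b ω B), 0)
      = σr.2.2 • (LinearMap.id.prod ((-(hypBilin b).flip (mirrorBField b σr B)).prod 0))
          (mirrorSigma b σr ω B).2 := by
    simp [hypBilin_apply, formC, smulC, conjC, mirrorSigma, mirrorOmega, mirrorBField,
      vGam, vsGam, xiMap, map_add, map_sub, map_smul, map_neg, map_zero,
      LinearMap.add_apply, LinearMap.sub_apply, LinearMap.smul_apply, LinearMap.neg_apply,
      LinearMap.prod_apply, Pi.prod, LinearMap.flip_apply, Prod.ext_iff, smul_smul,
      smul_eq_mul, hB3, hω3, hσi3, hbs1, hbs2, hbs3, hbs4, hbs5, hbs6, hωσi, hbs8, hbs9,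
      hbs10, hc1, hc2]
    and_intros <;> first | rfl | (field_simp; ring) | field_simp | ring
  have idC : (xiMap V') ((LinearMap.id.prod ((-(hypBilin b).flip B).prod 0)) σr)
      = σr.2.2 • ((mirrorBField b σr B : V' × ℝ × ℝ),
          (hypBilin b (mirrorOmega b σr σi B) (mirrorOmega b σr σi B) -
            hypBilin b (mirrorBField b σr B) (mirrorBField b σr B)) / 2, (1:ℝ)) := by
    simp [hypBilin_apply, formC, smulC, conjC, mirrorSigma, mirrorOmega, mirrorBField,
      vGam, vsGam, xiMap, map_add, map_sub, map_smul, map_neg, map_zero,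
      LinearMap.add_apply, LinearMap.sub_apply, LinearMap.smul_apply, LinearMap.neg_apply,
      LinearMap.prod_apply, Pi.prod, LinearMap.flip_apply, Prod.ext_iff, smul_smul,
      smul_eq_mul, hB3, hω3, hσi3, hbs1, hbs2, hbs3, hbs4, hbs5, hbs6, hωσi, hbs8, hbs9,
      hbs10, hc1, hc2]
    and_intros <;> first | rfl | (field_simp; ring) | field_simp | ring
  have idD : (xiMap V') ((LinearMap.id.prod ((-(hypBilin b).flip B).prod 0)) σi)
      = σr.2.2 • ((mirrorOmega b σr σi B : V' × ℝ × ℝ),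
          -(hypBilin b (mirrorOmega b σr σi B) (mirrorBField b σr B)), (0:ℝ)) := by
    simp [hypBilin_apply, formC, smulC, conjC, mirrorSigma, mirrorOmega, mirrorBField,
      vGam, vsGam, xiMap, map_add, map_sub, map_smul, map_neg, map_zero,
      LinearMap.add_apply, LinearMap.sub_apply, LinearMap.smul_apply, LinearMap.neg_apply,
      LinearMap.prod_apply, Pi.prod, LinearMap.flip_apply, Prod.ext_iff, smul_smul,
      smul_eq_mul, hB3, hω3, hσi3, hbs1, hbs2, hbs3, hbs4, hbs5, hbs6, hωσi, hbs8, hbs9,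
      hbs10, hc1, hc2]
    and_intros <;> first | rfl | (field_simp; ring) | field_simp | ring
  refine ⟨⟨?_, ?_⟩, ⟨?_, ?_, ?_⟩, ?_, ?_⟩
  · simp [hypBilin_apply, formC, smulC, conjC, mirrorSigma, mirrorOmega, mirrorBField,
      vGam, vsGam, xiMap, map_add, map_sub, map_smul, map_neg, map_zero,
      LinearMap.add_apply, LinearMap.sub_apply, LinearMap.smul_apply, LinearMap.neg_apply,
      LinearMap.prod_apply, Pi.prod, LinearMap.flip_apply, Prod.ext_iff, smul_smul,
      smul_eq_mul, hB3, hω3, hσi3, hbs1, hbs2, hbs3, hbs4, hbs5, hbs6, hωσi, hbs8, hbs9,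
      hbs10, hc1, hc2, Complex.ext_iff]
    constructor <;> ring
  · simp [hypBilin_apply, formC, smulC, conjC, mirrorSigma, mirrorOmega, mirrorBField,
      vGam, vsGam, xiMap, map_add, map_sub, map_smul, map_neg, map_zero,
      LinearMap.add_apply, LinearMap.sub_apply, LinearMap.smul_apply, LinearMap.neg_apply,
      LinearMap.prod_apply, Pi.prod, LinearMap.flip_apply, Prod.ext_iff, smul_smul,
      smul_eq_mul, hB3, hω3, hσi3, hbs1, hbs2, hbs3, hbs4, hbs5, hbs6, hωσi, hbs8, hbs9,
      hbs10, hc1, hc2]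
    ring_nf
    nlinarith [mul_pos hsq hα']
  · simp [hypBilin_apply, formC, smulC, conjC, mirrorSigma, mirrorOmega, mirrorBField,
      vGam, vsGam, xiMap, map_add, map_sub, map_smul, map_neg, map_zero,
      LinearMap.add_apply, LinearMap.sub_apply, LinearMap.smul_apply, LinearMap.neg_apply,
      LinearMap.prod_apply, Pi.prod, LinearMap.flip_apply, Prod.ext_iff, smul_smul,
      smul_eq_mul, hB3, hω3, hσi3, hbs1, hbs2, hbs3, hbs4, hbs5, hbs6, hωσi, hbs8, hbs9,
      hbs10, hc1, hc2]
    ring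
  · simp [hypBilin_apply, formC, smulC, conjC, mirrorSigma, mirrorOmega, mirrorBField,
      vGam, vsGam, xiMap, map_add, map_sub, map_smul, map_neg, map_zero,
      LinearMap.add_apply, LinearMap.sub_apply, LinearMap.smul_apply, LinearMap.neg_apply,
      LinearMap.prod_apply, Pi.prod, LinearMap.flip_apply, Prod.ext_iff, smul_smul,
      smul_eq_mul, hB3, hω3, hσi3, hbs1, hbs2, hbs3, hbs4, hbs5, hbs6, hωσi, hbs8, hbs9,
      hbs10, hc1, hc2]
  · simp [hypBilin_apply, formC, smulC, conjC, mirrorSigma, mirrorOmega, mirrorBField,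
      vGam, vsGam, xiMap, map_add, map_sub, map_smul, map_neg, map_zero,
      LinearMap.add_apply, LinearMap.sub_apply, LinearMap.smul_apply, LinearMap.neg_apply,
      LinearMap.prod_apply, Pi.prod, LinearMap.flip_apply, Prod.ext_iff, smul_smul,
      smul_eq_mul, hB3, hω3, hσi3, hbs1, hbs2, hbs3, hbs4, hbs5, hbs6, hωσi, hbs8, hbs9,
      hbs10, hc1, hc2]
    ring_nf
    exact mul_pos hsq hσipos
  · rw [H2, Submodule.map_span, Set.image_insert_eq, Set.image_singleton,
      H1, Submodule.map_span, Set.image_insert_eq, Set.image_singleton]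
    refine Submodule.span_eq_span ?_ ?_ <;>
      rw [Set.insert_subset_iff, Set.singleton_subset_iff]
    constructor
    · rw [idA]; exact Submodule.smul_mem _ _ (Submodule.subset_span (by simp))
    · rw [idB]; exact Submodule.smul_mem _ _ (Submodule.subset_span (by simp))
    constructor
    · rw [invsm _ _ idA]; exact Submodule.smul_mem _ _ (Submodule.subset_span (by simp))
    · rw [invsm _ _ idB]; exact Submodule.smul_mem _ _ (Submodule.subset_span (by simp))
  · rw [H1, Submodule.map_span, Set.image_insert_eq, Set.image_singleton,
      Submodule.map_span, Set.image_insert_eq, Set.image_singleton, H2]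
    refine Submodule.span_eq_span ?_ ?_ <;>
      rw [Set.insert_subset_iff, Set.singleton_subset_iff]
    constructor
    · rw [idC]; exact Submodule.smul_mem _ _ (Submodule.subset_span (by simp))
    · rw [idD]; exact Submodule.smul_mem _ _ (Submodule.subset_span (by simp))
    constructor
    · rw [invsm _ _ idC]; exact Submodule.smul_mem _ _ (Submodule.subset_span (by simp))
    · rw [invsm _ _ idD]; exact Submodule.smul_mem _ _ (Submodule.subset_span (by simp))
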